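/- arXiv:2502.10600 — 2 statements merged into one kernel-verified Lean document; each statement's English description precedes it below -/
import Mathlib

section
/- Suppose the C¹ kernel κ satisfies ∇₂κ(x,y) = (x−y) κ̄(x,y) for a symmetric kernel κ̄. If points y₁,...,y_M and weights w₁,...,w_M satisfy both v₀(yᵢ) = Σₘ wₘ κ(yₘ,yᵢ) and ∇v₀(yᵢ) = Σₘ wₘ ∇₂κ(yₘ,yᵢ) for all i, then K̄(Y) W(Y) Y = v̂₁(Y), where K̄(Y) = (κ̄(yᵢ,yⱼ)), W(Y) = diag(w), Y is the M×d matrix of points, and (v̂₁(Y))_{i,:} = ∇v₀(yᵢ) + yᵢ Σₘ wₘ κ̄(yₘ,yᵢ). -/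
open MeasureTheory

theorem Finset.sum_smul_sub_const {ι R E : Type*} [Ring R] [AddCommGroup E] [Module R E]
    (s : Finset ι) (c : ι → R) (y : ι → E) (x : E) :
    ∑ m ∈ s, c m • (y m - x) = ∑ m ∈ s, c m • y m - (∑ m ∈ s, c m) • x := by
  simp only [smul_sub, Finset.sum_sub_distrib, Finset.sum_smul]

theorem stmt10_general
    {d M : ℕ}
    (κbar : EuclideanSpace ℝ (Fin d) → EuclideanSpace ℝ (Fin d) → ℝ)
    (hsymm : ∀ x y, κbar x y = κbar y x)
    (gv₀ : EuclideanSpace ℝ (Fin d) → EuclideanSpace ℝ (Fin d))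
    (y : Fin M → EuclideanSpace ℝ (Fin d)) (w : Fin M → ℝ)
    (hstat1 : ∀ i, gv₀ (y i) = ∑ m, w m • (κbar (y m) (y i) • (y m - y i))) :
    ∀ i, (∑ m, (κbar (y i) (y m) * w m) • y m)
      = gv₀ (y i) + (∑ m, w m * κbar (y m) (y i)) • y i := by
  intro i
  have hweights : ∀ m, κbar (y i) (y m) * w m = w m * κbar (y m) (y i) := fun m => by
    rw [hsymm, mul_comm]
  simp only [hstat1 i, smul_smul, Finset.sum_smul_sub_const, hweights, sub_add_cancel]

/-- If `∇₂κ(x,y) = (x−y) κ̄(x,y)` for a symmetric kernel `κ̄`, and points/weights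
satisfy the stationarity conditions `v₀(yᵢ) = Σₘ wₘ κ(yₘ,yᵢ)` and
`∇v₀(yᵢ) = Σₘ wₘ ∇₂κ(yₘ,yᵢ)`, then `K̄(Y) W(Y) Y = v̂₁(Y)` rowwise, i.e.
`Σₘ κ̄(yᵢ,yₘ) wₘ yₘ = ∇v₀(yᵢ) + (Σₘ wₘ κ̄(yₘ,yᵢ)) yᵢ` for every `i`. -/
theorem stmt10
    {d M : ℕ}
    (κ κbar : EuclideanSpace ℝ (Fin d) → EuclideanSpace ℝ (Fin d) → ℝ)
    (hsymm : ∀ x y, κbar x y = κbar y x)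
    (hgrad : ∀ x y, HasGradientAt (κ x) (κbar x y • (x - y)) y)
    (B'κ : ℝ) (hbd : ∀ x y, ‖κbar x y • (x - y)‖ ≤ B'κ)
    (π : Measure (EuclideanSpace ℝ (Fin d))) [IsProbabilityMeasure π]
    (v₀ : EuclideanSpace ℝ (Fin d) → ℝ) (hv₀ : ∀ y, v₀ y = ∫ x, κ x y ∂π)
    (gv₀ : EuclideanSpace ℝ (Fin d) → EuclideanSpace ℝ (Fin d))
    (hgv₀ : ∀ y, HasGradientAt v₀ (gv₀ y) y)
    (y : Fin M → EuclideanSpace ℝ (Fin d)) (w : Fin M → ℝ)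
    (hstat0 : ∀ i, v₀ (y i) = ∑ m, w m * κ (y m) (y i))
    (hstat1 : ∀ i, gv₀ (y i) = ∑ m, w m • (κbar (y m) (y i) • (y m - y i))) :
    ∀ i, (∑ m, (κbar (y i) (y m) * w m) • y m)
      = gv₀ (y i) + (∑ m, w m * κbar (y m) (y i)) • y i :=
  stmt10_general κbar hsymm gv₀ y w hstat1
end

section
/- For M = 1, if κ̄ = λκ with λ ≠ 0, v₀(y) ≠ 0 and v̄₀(y) ≠ 0, then the mean shift interacting particles map coincides with the classical mean shift map: Ψ_MSIP(y) = Ψ_MS(y), where Ψ_MS(y) = v̄₁(y)/v̄₀(y). -/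
/-!
Since `κ̄ = λκ`, linearity of the integral gives `v̄₀ = λv₀`. The correction term
`(v₀(y)/κ(y,y)) κ̄(y,y) y = λ v₀(y) y = v̄₀(y) y` then cancels the term `-v̄₀(y) y` of
`∇v₀(y) = v̄₁(y) - v̄₀(y) y`, so `v̂₁(y) = v̄₁(y)`, and the prefactor collapses to
`(κ(y,y)/v₀(y)) (λκ(y,y))⁻¹ = (λv₀(y))⁻¹ = v̄₀(y)⁻¹`.
-/

open MeasureTheory

section Algebra

variable {K E : Type*} [Field K] [AddCommGroup E] [Module K E]

theorem sub_smul_add_div_mul_smul_cancel {a c : K} (hc : c ≠ 0) (lam : K) (v y : E) :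
    v - (lam * a) • y + (a / c * (lam * c)) • y = v := by
  have hcoef : a / c * (lam * c) = lam * a := by field_simp
  rw [hcoef, sub_add_cancel]

-- When `lam * a = 0` both sides vanish, because `0⁻¹ = 0` and `c / 0 = 0`.
theorem div_smul_inv_mul_smul {a c : K} (hc : c ≠ 0) (lam : K) (v : E) :
    (c / a) • ((lam * c)⁻¹ • v) = (lam * a)⁻¹ • v := by
  have hcoef : c / a * (lam * c)⁻¹ = (lam * a)⁻¹ := by field_simp
  rw [smul_smul, hcoef]

end Algebra

theorem stmt14_general
    {d : ℕ}
    (κ κbar : EuclideanSpace ℝ (Fin d) → EuclideanSpace ℝ (Fin d) → ℝ)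
    (lam : ℝ)
    (hprop : ∀ x y, κbar x y = lam * κ x y)
    (π : Measure (EuclideanSpace ℝ (Fin d)))
    (v₀ vbar₀ : EuclideanSpace ℝ (Fin d) → ℝ)
    (hv₀ : ∀ y, v₀ y = ∫ x, κ x y ∂π)
    (hvbar₀ : ∀ y, vbar₀ y = ∫ x, κbar x y ∂π)
    (vbar₁ gv₀ : EuclideanSpace ℝ (Fin d) → EuclideanSpace ℝ (Fin d))
    (hgv₀ : ∀ y, gv₀ y = vbar₁ y - vbar₀ y • y)
    (y : EuclideanSpace ℝ (Fin d))
    (hκyy : κ y y ≠ 0)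
    (vhat₁ ΨMSIP ΨMS : EuclideanSpace ℝ (Fin d))
    (hvhat₁ : vhat₁ = gv₀ y + ((v₀ y / κ y y) * κbar y y) • y)
    (hΨMSIP : ΨMSIP = (κ y y / v₀ y) • ((κbar y y)⁻¹ • vhat₁))
    (hΨMS : ΨMS = (vbar₀ y)⁻¹ • vbar₁ y) :
    ΨMSIP = ΨMS := by
  have hvbar₀y : vbar₀ y = lam * v₀ y := by
    simp only [hvbar₀, hv₀, hprop, integral_const_mul]
  have hvhat₁y : vhat₁ = vbar₁ y := by
    rw [hvhat₁, hgv₀, hvbar₀y, hprop y y]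
    exact sub_smul_add_div_mul_smul_cancel hκyy lam _ _
  rw [hΨMSIP, hΨMS, hvhat₁y, hprop y y, hvbar₀y]
  exact div_smul_inv_mul_smul hκyy lam _

/-- For `M = 1`, if `κ̄ = λκ` with `λ ≠ 0`, `v₀(y) ≠ 0` and `v̄₀(y) ≠ 0`, then the
mean shift interacting particles map coincides with the classical mean shift map:
`Ψ_MSIP(y) = Ψ_MS(y) = v̄₁(y)/v̄₀(y)`, where
`Ψ_MSIP(y) = (κ(y,y)/v₀(y)) κ̄(y,y)⁻¹ v̂₁(y)` and
`v̂₁(y) = ∇v₀(y) + (v₀(y)/κ(y,y)) κ̄(y,y) y`, using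
`∇v₀(y) = v̄₁(y) − v̄₀(y) y`. -/
theorem stmt14
    {d : ℕ}
    (κ κbar : EuclideanSpace ℝ (Fin d) → EuclideanSpace ℝ (Fin d) → ℝ)
    (lam : ℝ) (hlam : lam ≠ 0)
    (hprop : ∀ x y, κbar x y = lam * κ x y)
    (π : Measure (EuclideanSpace ℝ (Fin d))) [IsProbabilityMeasure π]
    (v₀ vbar₀ : EuclideanSpace ℝ (Fin d) → ℝ)
    (hv₀ : ∀ y, v₀ y = ∫ x, κ x y ∂π)
    (hvbar₀ : ∀ y, vbar₀ y = ∫ x, κbar x y ∂π)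
    (vbar₁ gv₀ : EuclideanSpace ℝ (Fin d) → EuclideanSpace ℝ (Fin d))
    (hvbar₁ : ∀ y, vbar₁ y = ∫ x, κbar x y • x ∂π)
    (hgv₀ : ∀ y, gv₀ y = vbar₁ y - vbar₀ y • y)
    (y : EuclideanSpace ℝ (Fin d))
    (hκyy : κ y y ≠ 0) (hv₀y : v₀ y ≠ 0) (hvbar₀y : vbar₀ y ≠ 0)
    (vhat₁ ΨMSIP ΨMS : EuclideanSpace ℝ (Fin d))
    (hvhat₁ : vhat₁ = gv₀ y + ((v₀ y / κ y y) * κbar y y) • y)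
    (hΨMSIP : ΨMSIP = (κ y y / v₀ y) • ((κbar y y)⁻¹ • vhat₁))
    (hΨMS : ΨMS = (vbar₀ y)⁻¹ • vbar₁ y) :
    ΨMSIP = ΨMS :=
  stmt14_general κ κbar lam hprop π v₀ vbar₀ hv₀ hvbar₀ vbar₁ gv₀ hgv₀ y hκyy vhat₁ ΨMSIP ΨMS hvhat₁
    hΨMSIP hΨMS
end
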